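/- Let λ₁, λ₂, λ₃, λ₄ > 0, θ > 0, c₁, c₂, c₃, c₄ > 0, u* ∈ ℝ, and write φᵢ = φ_{λᵢ} where φ_λ(x) = λ(e^x − 1). Let η₁, η₂, η₃, η₄ : [0,∞) → ℝ be differentiable and set z₁ = η₃ − η₂, z₂ = η₄ − z₁, z₃ = η₁ − z₂. Assume φ₁(z₃(t)) ≠ 0 for all t and that the closed-loop system η₁′ = u* − u − φ₂(η₂), η₂′ = −φ₃(η₃), η₃′ = −φ₄(η₄), η₄′ = −φ₁(η₁) holds, where u = u* + (1/φ₁(z₃))·(c₄·φ₁(z₃)² + θc₁·φ₂(η₂)² + θc₃·φ₄(z₂)² + θc₂·φ₃(z₁)²) + ((φ₁(z₃) − θφ₄(z₂))/φ₁(z₃))·φ₁(η₁) − φ₂(η₂) + ((φ₁(z₃) − θφ₄(z₂) + θφ₃(z₁) − θφ₂(η₂))/φ₁(z₃))·φ₃(η₃) + ((θφ₄(z₂) − φ₁(z₃) − θφ₃(z₁))/φ₁(z₃))·φ₄(η₄). Then, with V₄(η₂, z₁, z₂, z₃) = θλ₂ω̃(η₂) + θλ₃ω̃(z₁) + θλ₄ω̃(z₂)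 + λ₁ω̃(z₃) and ω̃(x) = e^x − 1 − x, one has for every t: d/dt V₄ = −θc₁·φ₂(η₂)² − θc₂·φ₃(z₁)² − θc₃·φ₄(z₂)² − c₄·φ₁(z₃)². -/

import Mathlib

/-- `φ_λ(x) = λ(e^x − 1)`. -/
noncomputable def phiL (l x : ℝ) : ℝ := l * (Real.exp x - 1)

/-- `ω̃(x) = e^x − 1 − x`. -/
noncomputable def omegaTilde (x : ℝ) : ℝ := Real.exp x - 1 - x

/-!
Since `ω̃' = e^x − 1`, the derivative of `λ ω̃(x(t))` is `φ_λ(x(t)) x'(t)`, so `V₄'` is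
`θφ₂(η₂)η₂' + θφ₃(z₁)z₁' + θφ₄(z₂)z₂' + φ₁(z₃)z₃'`, and each `zᵢ'` is read off the closed loop.
The control `u` is built so that `φ₁(z₃)(u* − u)` cancels every cross term, leaving only the
negative squares; after substituting the derivatives this is a rational identity in the
values `φᵢ(·)`, valid as soon as `φ₁(z₃) ≠ 0`.
-/

theorem phiL_mul (c l x : ℝ) : phiL (c * l) x = c * phiL l x := by
  simp only [phiL, mul_assoc]

theorem hasDerivAt_omegaTilde (x : ℝ) : HasDerivAt omegaTilde (Real.exp x - 1) x :=
  ((Real.hasDerivAt_exp x).sub_const 1).sub (hasDerivAt_id x)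

theorem HasDerivWithinAt.const_mul_omegaTilde {f : ℝ → ℝ} {f' t : ℝ} {s : Set ℝ}
    (hf : HasDerivWithinAt f f' s t) (l : ℝ) :
    HasDerivWithinAt (fun r => l * omegaTilde (f r)) (phiL l (f t) * f') s t := by
  have h := ((hasDerivAt_omegaTilde (f t)).comp_hasDerivWithinAt t hf).const_mul l
  rwa [← mul_assoc] at h

/-- `Φz3`, `Φz2`, `Φz1`, `Φηᵢ` stand for `φ₁(z₃)`, `φ₄(z₂)`, `φ₃(z₁)`, `φᵢ(ηᵢ)`; the left side is
`V₄'` with the closed-loop derivatives substituted. -/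
theorem backstepping_dissipation_identity
    (θ c1 c2 c3 c4 ustar u Φz3 Φz2 Φz1 Φη1 Φη2 Φη3 Φη4 : ℝ) (hΦz3 : Φz3 ≠ 0)
    (hu : u = ustar + (1 / Φz3) * (c4 * Φz3 ^ 2 + θ * c1 * Φη2 ^ 2 + θ * c3 * Φz2 ^ 2
        + θ * c2 * Φz1 ^ 2)
      + ((Φz3 - θ * Φz2) / Φz3) * Φη1 - Φη2
      + ((Φz3 - θ * Φz2 + θ * Φz1 - θ * Φη2) / Φz3) * Φη3
      + ((θ * Φz2 - Φz3 - θ * Φz1) / Φz3) * Φη4) :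
    θ * Φη2 * (-Φη3) + θ * Φz1 * (Φη3 - Φη4) + θ * Φz2 * (Φη4 - Φη3 - Φη1)
        + Φz3 * (ustar - u - Φη2 + Φη1 - Φη4 + Φη3)
      = -(θ * c1 * Φη2 ^ 2) - θ * c2 * Φz1 ^ 2 - θ * c3 * Φz2 ^ 2 - c4 * Φz3 ^ 2 := by
  subst hu
  field_simp
  ring

theorem stmt4_general (l1 l2 l3 l4 θ c1 c2 c3 c4 ustar : ℝ)
    (η1 η2 η3 η4 z1 z2 z3 u : ℝ → ℝ)
    (hz1 : ∀ t, z1 t = η3 t - η2 t)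
    (hz2 : ∀ t, z2 t = η4 t - z1 t)
    (hz3 : ∀ t, z3 t = η1 t - z2 t)
    (hne : ∀ t, 0 ≤ t → phiL l1 (z3 t) ≠ 0)
    (hu : ∀ t, u t = ustar
      + (1 / phiL l1 (z3 t)) *
          (c4 * (phiL l1 (z3 t))^2 + θ * c1 * (phiL l2 (η2 t))^2
            + θ * c3 * (phiL l4 (z2 t))^2 + θ * c2 * (phiL l3 (z1 t))^2)
      + ((phiL l1 (z3 t) - θ * phiL l4 (z2 t)) / phiL l1 (z3 t)) * phiL l1 (η1 t)
      - phiL l2 (η2 t)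
      + ((phiL l1 (z3 t) - θ * phiL l4 (z2 t) + θ * phiL l3 (z1 t)
            - θ * phiL l2 (η2 t)) / phiL l1 (z3 t)) * phiL l3 (η3 t)
      + ((θ * phiL l4 (z2 t) - phiL l1 (z3 t) - θ * phiL l3 (z1 t))
            / phiL l1 (z3 t)) * phiL l4 (η4 t))
    (hd1 : ∀ t, 0 ≤ t →
      HasDerivWithinAt η1 (ustar - u t - phiL l2 (η2 t)) (Set.Ici 0) t)
    (hd2 : ∀ t, 0 ≤ t →
      HasDerivWithinAt η2 (-(phiL l3 (η3 t))) (Set.Ici 0) t)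
    (hd3 : ∀ t, 0 ≤ t →
      HasDerivWithinAt η3 (-(phiL l4 (η4 t))) (Set.Ici 0) t)
    (hd4 : ∀ t, 0 ≤ t →
      HasDerivWithinAt η4 (-(phiL l1 (η1 t))) (Set.Ici 0) t) :
    ∀ t, 0 ≤ t → HasDerivWithinAt
      (fun s => θ * l2 * omegaTilde (η2 s) + θ * l3 * omegaTilde (z1 s)
        + θ * l4 * omegaTilde (z2 s) + l1 * omegaTilde (z3 s))
      (-(θ * c1 * (phiL l2 (η2 t))^2) - θ * c2 * (phiL l3 (z1 t))^2
        - θ * c3 * (phiL l4 (z2 t))^2 - c4 * (phiL l1 (z3 t))^2)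
      (Set.Ici 0) t := by
  intro t ht
  have dz1 : HasDerivWithinAt z1 (phiL l3 (η3 t) - phiL l4 (η4 t)) (Set.Ici 0) t := by
    rw [funext hz1]; exact ((hd3 t ht).sub (hd2 t ht)).congr_deriv (by ring)
  have dz2 : HasDerivWithinAt z2 (phiL l4 (η4 t) - phiL l3 (η3 t) - phiL l1 (η1 t))
      (Set.Ici 0) t := by
    rw [funext hz2]; exact ((hd4 t ht).sub dz1).congr_deriv (by ring)
  have dz3 : HasDerivWithinAt z3
      (ustar - u t - phiL l2 (η2 t) + phiL l1 (η1 t) - phiL l4 (η4 t) + phiL l3 (η3 t))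
      (Set.Ici 0) t := by
    rw [funext hz3]; exact ((hd1 t ht).sub dz2).congr_deriv (by ring)
  have hV := ((((hd2 t ht).const_mul_omegaTilde (θ * l2)).add
    (dz1.const_mul_omegaTilde (θ * l3))).add (dz2.const_mul_omegaTilde (θ * l4))).add
    (dz3.const_mul_omegaTilde l1)
  refine hV.congr_deriv ?_
  simp only [phiL_mul]
  linear_combination (backstepping_dissipation_identity θ c1 c2 c3 c4 ustar (u t)
    (phiL l1 (z3 t)) (phiL l4 (z2 t)) (phiL l3 (z1 t)) (phiL l1 (η1 t)) (phiL l2 (η2 t))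
    (phiL l3 (η3 t)) (phiL l4 (η4 t)) (hne t ht) (hu t))

/-- Lyapunov dissipation identity of Proposition 3.17 (four-species non-transitive
competition, `ψᵢ ≡ 0`): along the closed loop with the backstepping control `u`,
`d/dt V₄ = −θc₁φ₂(η₂)² − θc₂φ₃(z₁)² − θc₃φ₄(z₂)² − c₄φ₁(z₃)²`. -/
theorem stmt4 (l1 l2 l3 l4 θ c1 c2 c3 c4 ustar : ℝ)
    (hl1 : 0 < l1) (hl2 : 0 < l2) (hl3 : 0 < l3) (hl4 : 0 < l4) (hθ : 0 < θ)
    (hc1 : 0 < c1) (hc2 : 0 < c2) (hc3 : 0 < c3) (hc4 : 0 < c4)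
    (η1 η2 η3 η4 z1 z2 z3 u : ℝ → ℝ)
    (hz1 : ∀ t, z1 t = η3 t - η2 t)
    (hz2 : ∀ t, z2 t = η4 t - z1 t)
    (hz3 : ∀ t, z3 t = η1 t - z2 t)
    (hne : ∀ t, 0 ≤ t → phiL l1 (z3 t) ≠ 0)
    (hu : ∀ t, u t = ustar
      + (1 / phiL l1 (z3 t)) *
          (c4 * (phiL l1 (z3 t))^2 + θ * c1 * (phiL l2 (η2 t))^2
            + θ * c3 * (phiL l4 (z2 t))^2 + θ * c2 * (phiL l3 (z1 t))^2)
      + ((phiL l1 (z3 t) - θ * phiL l4 (z2 t)) / phiL l1 (z3 t)) * phiL l1 (η1 t)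
      - phiL l2 (η2 t)
      + ((phiL l1 (z3 t) - θ * phiL l4 (z2 t) + θ * phiL l3 (z1 t)
            - θ * phiL l2 (η2 t)) / phiL l1 (z3 t)) * phiL l3 (η3 t)
      + ((θ * phiL l4 (z2 t) - phiL l1 (z3 t) - θ * phiL l3 (z1 t))
            / phiL l1 (z3 t)) * phiL l4 (η4 t))
    (hd1 : ∀ t, 0 ≤ t →
      HasDerivWithinAt η1 (ustar - u t - phiL l2 (η2 t)) (Set.Ici 0) t)
    (hd2 : ∀ t, 0 ≤ t →
      HasDerivWithinAt η2 (-(phiL l3 (η3 t))) (Set.Ici 0) t)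
    (hd3 : ∀ t, 0 ≤ t →
      HasDerivWithinAt η3 (-(phiL l4 (η4 t))) (Set.Ici 0) t)
    (hd4 : ∀ t, 0 ≤ t →
      HasDerivWithinAt η4 (-(phiL l1 (η1 t))) (Set.Ici 0) t) :
    ∀ t, 0 ≤ t → HasDerivWithinAt
      (fun s => θ * l2 * omegaTilde (η2 s) + θ * l3 * omegaTilde (z1 s)
        + θ * l4 * omegaTilde (z2 s) + l1 * omegaTilde (z3 s))
      (-(θ * c1 * (phiL l2 (η2 t))^2) - θ * c2 * (phiL l3 (z1 t))^2
        - θ * c3 * (phiL l4 (z2 t))^2 - c4 * (phiL l1 (z3 t))^2)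
      (Set.Ici 0) t :=
  stmt4_general l1 l2 l3 l4 θ c1 c2 c3 c4 ustar η1 η2 η3 η4 z1 z2 z3 u hz1 hz2 hz3 hne hu hd1 hd2
    hd3 hd4
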